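/- Let δ ∈ (0, 1/8) and let n ∈ ℕ. There exist constants c > 0 and c′ > 0 such that for every j ∈ ℕ, every real number q with q ≥ −j, and every t ∈ ℝ with |t| ≤ δ · 2^{(q+j)/2}, one has ∑_{m=0}^∞ (|t|^m / m!) · ((m+1) · 2^{−j})^{−n/2} · exp(−2^q / (4(m+1)2^{−j})) ≤ c · 2^{jn/2} · exp(−c′ · 2^{(q+j)/2}). -/
import Mathlib

/-- The series bound underlying the pointwise heat-semigroup estimate (3.1):
for `δ ∈ (0, 1/8)` and `n ∈ ℕ` there are `c, c' > 0` such that for every `j ∈ ℕ`,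
every `q ≥ -j` and every `t` with `|t| ≤ δ 2^{(q+j)/2}`,
`∑_m (|t|^m/m!) ((m+1) 2^{-j})^{-n/2} e^{-2^q/(4(m+1)2^{-j})}
  ≤ c 2^{jn/2} e^{-c' 2^{(q+j)/2}}`. -/
theorem stmt_3 (δ : ℝ) (hδ : δ ∈ Set.Ioo (0 : ℝ) (1 / 8)) (n : ℕ) :
    ∃ c > (0 : ℝ), ∃ c' > (0 : ℝ), ∀ j : ℕ, ∀ q : ℝ, -(j : ℝ) ≤ q →
      ∀ t : ℝ, |t| ≤ δ * (2 : ℝ) ^ ((q + j) / 2) →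
        ∑' m : ℕ, |t| ^ m / (Nat.factorial m) *
            (((m : ℝ) + 1) * (2 : ℝ) ^ (-(j : ℝ))) ^ (-(n : ℝ) / 2) *
            Real.exp (-(2 : ℝ) ^ q / (4 * (((m : ℝ) + 1) * (2 : ℝ) ^ (-(j : ℝ))))) ≤
          c * (2 : ℝ) ^ ((j : ℝ) * n / 2) * Real.exp (-c' * (2 : ℝ) ^ ((q + j) / 2)) := by
  obtain ⟨hδ0, hδ8⟩ := hδ
  have he3 : Real.exp 1 < 3 := by
    have := Real.exp_one_lt_d9; linarith
  refine ⟨Real.exp 1, Real.exp_pos 1, 1 - δ * Real.exp 1,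
    by nlinarith [Real.exp_pos 1], ?_⟩
  intro j q hq t ht
  set a : ℝ := (2 : ℝ) ^ ((q + j) / 2) with ha_def
  have ha : 0 < a := Real.rpow_pos_of_pos two_pos _
  have haa : a * a = (2 : ℝ) ^ (q + (j : ℝ)) := by
    rw [ha_def, ← Real.rpow_add two_pos]; ring_nf
  set A : ℝ := (2 : ℝ) ^ ((j : ℝ) * n / 2) with hA_def
  have hA : 0 < A := Real.rpow_pos_of_pos two_pos _
  have hb : (0 : ℝ) < (2 : ℝ) ^ (-(j : ℝ)) := Real.rpow_pos_of_pos two_pos _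
  have hq2 : (2 : ℝ) ^ q = a * a * (2 : ℝ) ^ (-(j : ℝ)) := by
    rw [haa, ← Real.rpow_add two_pos, add_neg_cancel_right]
  have key : ∀ m : ℕ, |t| ^ m / (Nat.factorial m) *
      (((m : ℝ) + 1) * (2 : ℝ) ^ (-(j : ℝ))) ^ (-(n : ℝ) / 2) *
      Real.exp (-(2 : ℝ) ^ q / (4 * (((m : ℝ) + 1) * (2 : ℝ) ^ (-(j : ℝ))))) ≤
      (|t| * Real.exp 1) ^ m / (Nat.factorial m) * (A * Real.exp (1 - a)) := by
    intro m
    have hx : (0 : ℝ) < (m : ℝ) + 1 := by positivity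
    have h1 : (0 : ℝ) ≤ |t| ^ m / (Nat.factorial m) := by positivity
    have h2 : (((m : ℝ) + 1) * (2 : ℝ) ^ (-(j : ℝ))) ^ (-(n : ℝ) / 2) ≤ A := by
      rw [Real.mul_rpow hx.le hb.le, ← Real.rpow_mul two_pos.le,
        show -(j : ℝ) * (-(n : ℝ) / 2) = (j : ℝ) * n / 2 by ring, ← hA_def]
      exact mul_le_of_le_one_left hA.le
        (Real.rpow_le_one_of_one_le_of_nonpos (by linarith [Nat.cast_nonneg (α := ℝ) m])
          (by have : (0 : ℝ) ≤ (n : ℝ) := Nat.cast_nonneg n; linarith))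
    have h3 : Real.exp (-(2 : ℝ) ^ q / (4 * (((m : ℝ) + 1) * (2 : ℝ) ^ (-(j : ℝ))))) ≤
        Real.exp 1 ^ m * Real.exp (1 - a) := by
      have harg : -(2 : ℝ) ^ q / (4 * (((m : ℝ) + 1) * (2 : ℝ) ^ (-(j : ℝ)))) =
          -(a * a) / (4 * ((m : ℝ) + 1)) := by
        rw [hq2]; field_simp
      rw [harg, ← Real.exp_nat_mul, mul_one, ← Real.exp_add]
      apply Real.exp_le_exp.mpr
      rw [div_le_iff₀ (by positivity)]
      nlinarith [sq_nonneg (a - 2 * ((m : ℝ) + 1))]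
    calc |t| ^ m / (Nat.factorial m) *
          (((m : ℝ) + 1) * (2 : ℝ) ^ (-(j : ℝ))) ^ (-(n : ℝ) / 2) *
          Real.exp (-(2 : ℝ) ^ q / (4 * (((m : ℝ) + 1) * (2 : ℝ) ^ (-(j : ℝ))))) ≤
        |t| ^ m / (Nat.factorial m) * A * (Real.exp 1 ^ m * Real.exp (1 - a)) := by
          apply mul_le_mul (mul_le_mul_of_nonneg_left h2 h1) h3 (Real.exp_pos _).le
            (by positivity)
      _ = (|t| * Real.exp 1) ^ m / (Nat.factorial m) * (A * Real.exp (1 - a)) := by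
          rw [mul_pow]; ring
  have hg : Summable (fun m : ℕ => (|t| * Real.exp 1) ^ m / (Nat.factorial m) *
      (A * Real.exp (1 - a))) :=
    (Real.summable_pow_div_factorial _).mul_right _
  have hf : Summable (fun m : ℕ => |t| ^ m / (Nat.factorial m) *
      (((m : ℝ) + 1) * (2 : ℝ) ^ (-(j : ℝ))) ^ (-(n : ℝ) / 2) *
      Real.exp (-(2 : ℝ) ^ q / (4 * (((m : ℝ) + 1) * (2 : ℝ) ^ (-(j : ℝ)))))) :=
    Summable.of_nonneg_of_le (fun m => by positivity) key hg
  have htsum : ∑' m : ℕ, (|t| * Real.exp 1) ^ m / (Nat.factorial m) *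
      (A * Real.exp (1 - a)) = Real.exp (|t| * Real.exp 1) * (A * Real.exp (1 - a)) := by
    rw [tsum_mul_right, Real.exp_eq_exp_ℝ, NormedSpace.exp_eq_tsum_div]
  calc ∑' m : ℕ, |t| ^ m / (Nat.factorial m) *
        (((m : ℝ) + 1) * (2 : ℝ) ^ (-(j : ℝ))) ^ (-(n : ℝ) / 2) *
        Real.exp (-(2 : ℝ) ^ q / (4 * (((m : ℝ) + 1) * (2 : ℝ) ^ (-(j : ℝ))))) ≤
      ∑' m : ℕ, (|t| * Real.exp 1) ^ m / (Nat.factorial m) * (A * Real.exp (1 - a)) :=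
        Summable.tsum_le_tsum key hf hg
    _ = Real.exp (|t| * Real.exp 1) * (A * Real.exp (1 - a)) := htsum
    _ ≤ Real.exp 1 * A * Real.exp (-(1 - δ * Real.exp 1) * a) := by
        have hEq : Real.exp 1 * A * Real.exp (-(1 - δ * Real.exp 1) * a) =
            Real.exp (δ * Real.exp 1 * a) * (A * Real.exp (1 - a)) := by
          have h : Real.exp 1 * Real.exp (-(1 - δ * Real.exp 1) * a) =
              Real.exp (δ * Real.exp 1 * a) * Real.exp (1 - a) := by
            rw [← Real.exp_add, ← Real.exp_add]; ring_nf
          linear_combination A * h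
        rw [hEq]
        apply mul_le_mul_of_nonneg_right _ (by positivity)
        apply Real.exp_le_exp.mpr
        nlinarith [mul_le_mul_of_nonneg_right ht (Real.exp_pos 1).le]
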